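/- Let B be a melonic D-colored graph with 2k vertices. There exists a unique melonic (D+1)-colored graph G with 4k vertices that reduces to B by deleting all edges of color 0 and such that no edge of color 0 of G connects two vertices of B; its tree is obtained from the tree of B by attaching to every vertex a color-0 tree edge ending in a new vertex. -/

import Mathlib

/-- Rooted `m`-ary colored trees, encoding melonic `m`-colored graphs:
each internal vertex has one child per color in `Fin m`. -/
inductive AryTree (m : ℕ) : Type
  | leaf : AryTree m
  | node : (Fin m → AryTree m) → AryTree m

/-- The number of internal vertices of a tree (one internal vertex per melon,
i.e. per pair of graph vertices; a tree with `k` internal vertices encodes a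
melonic graph with `2k` vertices). -/
def AryTree.internalCount {m : ℕ} : AryTree m → ℕ
  | .leaf => 0
  | .node f => 1 + ∑ i : Fin m, (f i).internalCount

/-- Deleting all tree edges and leaves of color `0` from the tree of a melonic
`(D+1)`-colored graph: the component containing the root (the tree of the
distinguished `D`-bubble `B`) is obtained by discarding the color-`0` child of
every vertex. -/
def AryTree.skel {D : ℕ} : AryTree (D + 1) → AryTree D
  | .leaf => .leaf
  | .node f => .node (fun i => (f i.succ).skel)

/-- No vertex of `B` (i.e. no skeleton vertex) carries a leaf of color `0`:
a color-`0` leaf at a skeleton vertex would be a color-`0` edge of `G`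
connecting two vertices of `B`.  So the color-`0` child of every skeleton
vertex must be an internal vertex. -/
inductive AryTree.NoZeroEdgeInside : ∀ {D : ℕ}, AryTree (D + 1) → Prop
  | leaf {D : ℕ} : NoZeroEdgeInside (D := D) .leaf
  | node {D : ℕ} (f : Fin (D + 1) → AryTree (D + 1))
      (h0 : f 0 ≠ .leaf)
      (h : ∀ i : Fin D, NoZeroEdgeInside (f i.succ)) :
      NoZeroEdgeInside (.node f)

/-- Attaching to every vertex of a `D`-ary tree a color-`0` tree edge ending in
a new vertex (a `(D+2)`-valent vertex carrying `D+1` leaves). -/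
def AryTree.attachZeroMelon {D : ℕ} : AryTree D → AryTree (D + 1)
  | .leaf => .leaf
  | .node f => .node (Fin.cases (.node fun _ => .leaf) (fun i => (f i).attachZeroMelon))

/-!
The condition forces every vertex of the tree of `B` to carry an internal color-`0` child, so
`G` has at least twice as many internal vertices as `B`. Equality leaves room for exactly one new
vertex below each vertex of `B`, carrying only leaves: this is `attachZeroMelon`.
-/

namespace AryTree

variable {m D : ℕ}

@[simp]
lemma internalCount_leaf : (leaf : AryTree m).internalCount = 0 := rfl

@[simp]
lemma internalCount_node (f : Fin m → AryTree m) :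
    (node f).internalCount = 1 + ∑ i, (f i).internalCount := rfl

@[simp]
lemma internalCount_eq_zero_iff {t : AryTree m} : t.internalCount = 0 ↔ t = leaf := by
  cases t <;> simp

lemma internalCount_eq_one_iff {t : AryTree m} :
    t.internalCount = 1 ↔ t = node fun _ => leaf := by
  cases t with
  | leaf => simp
  | node f => simp [Finset.sum_eq_zero_iff, funext_iff]

lemma skel_attachZeroMelon (t : AryTree D) : t.attachZeroMelon.skel = t := by
  induction t with
  | leaf => rfl
  | node f ih => simp [attachZeroMelon, skel, ih]

lemma noZeroEdgeInside_attachZeroMelon (t : AryTree D) : t.attachZeroMelon.NoZeroEdgeInside := by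
  induction t with
  | leaf => exact .leaf
  | node f ih => exact .node _ (by simp) fun i => by simpa using ih i

lemma internalCount_attachZeroMelon (t : AryTree D) :
    t.attachZeroMelon.internalCount = 2 * t.internalCount := by
  induction t with
  | leaf => rfl
  | node f ih =>
    simp only [attachZeroMelon, internalCount_node, Fin.sum_univ_succ, Fin.cases_zero,
      Fin.cases_succ, ih, internalCount_leaf, Finset.sum_const_zero, ← Finset.mul_sum]
    omega

namespace NoZeroEdgeInside

lemma two_mul_internalCount_skel_le {g : AryTree (D + 1)} (h : g.NoZeroEdgeInside) :
    2 * g.skel.internalCount ≤ g.internalCount := by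
  induction h with
  | leaf => simp [skel]
  | node f h0 _ ih =>
    have hf0 : (f 0).internalCount ≠ 0 := by simpa using h0
    have hsum := Finset.sum_le_sum fun i (_ : i ∈ Finset.univ) => ih i
    simp only [skel, internalCount_node, Fin.sum_univ_succ, ← Finset.mul_sum] at hsum ⊢
    omega

lemma eq_attachZeroMelon_skel {g : AryTree (D + 1)} (h : g.NoZeroEdgeInside)
    (hc : g.internalCount = 2 * g.skel.internalCount) : g = g.skel.attachZeroMelon := by
  induction h with
  | leaf => rfl
  | node f h0 h ih =>
    have hf0 : (f 0).internalCount ≠ 0 := by simpa using h0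
    have hle : ∀ i ∈ (Finset.univ : Finset (Fin D)),
        2 * (f i.succ).skel.internalCount ≤ (f i.succ).internalCount :=
      fun i _ => (h i).two_mul_internalCount_skel_le
    have hsum := Finset.sum_le_sum hle
    simp only [skel, internalCount_node, Fin.sum_univ_succ, ← Finset.mul_sum] at hc hsum
    have hzero : f 0 = .node fun _ => .leaf := internalCount_eq_one_iff.mp (by omega)
    have hsucc : ∀ i : Fin D, (f i.succ).internalCount = 2 * (f i.succ).skel.internalCount :=
      fun i => ((Finset.sum_eq_sum_iff_of_le hle).mp (by rw [← Finset.mul_sum]; omega) i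
        (Finset.mem_univ i)).symm
    simp only [skel, attachZeroMelon, AryTree.node.injEq]
    funext i
    cases i using Fin.cases with
    | zero => simpa using hzero
    | succ i => simpa using ih i (hsucc i)

end NoZeroEdgeInside

end AryTree

/-- Let `B` be a melonic `D`-colored graph with `2k` vertices, encoded by its
`D`-ary tree `t` with `k` vertices.  There exists a unique melonic
`(D+1)`-colored graph `G` with `4k` vertices that reduces to `B` by deleting all
edges of color `0` and such that no edge of color `0` of `G` connects two
vertices of `B`; its tree is obtained from `t` by attaching to every vertex a
color-`0` tree edge ending in a new vertex. -/
theorem unique_melonic_double_covering (D : ℕ) (t : AryTree D) :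
    (∃! g : AryTree (D + 1),
        g.skel = t ∧ g.NoZeroEdgeInside ∧
          g.internalCount = 2 * t.internalCount) ∧
    (t.attachZeroMelon.skel = t ∧ t.attachZeroMelon.NoZeroEdgeInside ∧
      t.attachZeroMelon.internalCount = 2 * t.internalCount) := by
  have hcover : t.attachZeroMelon.skel = t ∧ t.attachZeroMelon.NoZeroEdgeInside ∧
      t.attachZeroMelon.internalCount = 2 * t.internalCount :=
    ⟨t.skel_attachZeroMelon, t.noZeroEdgeInside_attachZeroMelon,
      t.internalCount_attachZeroMelon⟩
  refine ⟨⟨t.attachZeroMelon, hcover, ?_⟩, hcover⟩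
  rintro g ⟨rfl, hg, hc⟩
  exact hg.eq_attachZeroMelon_skel hc
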